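/- Let g > 0 and μ > 0 be real numbers. If the family (p,q) ↦ C(p,q) · g^{p+q} · μ^q, indexed by ℕ × ℕ, is summable, then g < 27/256 and g·μ < 1/4. -/

import Mathlib

/-!
Along the row `q = 1`, `C(p+1,1)/C(p,1) ≥ (256/27)(p+1)/(p+2)`, so `(p+1) C(p,1) (27/256)^p` is
nondecreasing and for `g ≥ 27/256` the row dominates a multiple of the harmonic series. Along the
column `p = 2`, `C(2,q+1)/C(2,q) ≥ 4`, so for `gμ ≥ 1/4` the terms `C(2,q) g^(2+q) μ^q` stay
above `4g²` and do not tend to zero.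
-/

/-- The melonic coefficient `C(p,q) = (4p + 2q)! / (p! q! (3p + q + 1)!)`,
regarded as a real number. -/
noncomputable def melonC (p q : ℕ) : ℝ :=
  (Nat.factorial (4 * p + 2 * q) : ℝ) /
    ((Nat.factorial p : ℝ) * (Nat.factorial q : ℝ) * (Nat.factorial (3 * p + q + 1) : ℝ))

lemma melonC_pos (p q : ℕ) : 0 < melonC p q := by
  unfold melonC
  positivity

lemma melonC_succ_one_mul (p : ℕ) :
    melonC (p + 1) 1 * ((p + 1) * (3 * p + 3) * (3 * p + 4) * (3 * p + 5)) =
      melonC p 1 * ((4 * p + 3) * (4 * p + 4) * (4 * p + 5) * (4 * p + 6)) := by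
  unfold melonC
  rw [show 4 * (p + 1) + 2 * 1 = 4 * p + 2 + 1 + 1 + 1 + 1 by ring,
    show 3 * (p + 1) + 1 + 1 = 3 * p + 2 + 1 + 1 + 1 by ring]
  simp only [Nat.factorial_succ, Nat.cast_mul, Nat.cast_add, Nat.cast_ofNat, Nat.cast_one,
    mul_one]
  field_simp
  ring

lemma melonC_two_succ_mul (q : ℕ) :
    melonC 2 (q + 1) * ((q + 1) * (q + 8)) = melonC 2 q * ((2 * q + 9) * (2 * q + 10)) := by
  unfold melonC
  rw [show 4 * 2 + 2 * (q + 1) = 2 * q + 8 + 1 + 1 by ring,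
    show 3 * 2 + (q + 1) + 1 = q + 7 + 1 by ring, show 4 * 2 + 2 * q = 2 * q + 8 by ring,
    show 3 * 2 + q + 1 = q + 7 by ring]
  simp only [Nat.factorial_succ, Nat.cast_mul, Nat.cast_add, Nat.cast_ofNat, Nat.cast_one]
  field_simp
  ring

lemma monotone_succ_mul_melonC_one :
    Monotone fun p : ℕ => (p + 1) * melonC p 1 * (27 / 256 : ℝ) ^ p := by
  refine monotone_nat_of_le_succ fun p => ?_
  have hrec := melonC_succ_one_mul p
  have hC := (melonC_pos p 1).le
  have hden : (0 : ℝ) < (p + 1) * (3 * p + 3) * (3 * p + 4) * (3 * p + 5) := by positivity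
  rw [← mul_le_mul_iff_left₀ hden]
  push_cast
  calc (p + 1) * melonC p 1 * (27 / 256 : ℝ) ^ p *
        ((p + 1) * (3 * p + 3) * (3 * p + 4) * (3 * p + 5))
      = melonC p 1 * (27 / 256 : ℝ) ^ p *
          ((p + 1) * ((p + 1) * (3 * p + 3) * (3 * p + 4) * (3 * p + 5))) := by ring
    _ ≤ melonC p 1 * (27 / 256 : ℝ) ^ p *
          (27 * (p + 2) * ((4 * p + 3) * (4 * p + 4) * (4 * p + 5) * (4 * p + 6)) / 256) := by
        gcongr
        ring_nf
        nlinarith [Nat.cast_nonneg (α := ℝ) p]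
    _ = (p + 1 + 1) * (melonC (p + 1) 1 * ((p + 1) * (3 * p + 3) * (3 * p + 4) * (3 * p + 5))) *
          (27 / 256 : ℝ) ^ (p + 1) := by
        rw [hrec, pow_succ]; ring
    _ = _ := by ring

lemma monotone_melonC_two_mul_pow :
    Monotone fun q : ℕ => melonC 2 q * (1 / 4 : ℝ) ^ q := by
  refine monotone_nat_of_le_succ fun q => ?_
  have hrec := melonC_two_succ_mul q
  have hC := (melonC_pos 2 q).le
  have hden : (0 : ℝ) < (q + 1) * (q + 8) := by positivity
  rw [← mul_le_mul_iff_left₀ hden]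
  calc melonC 2 q * (1 / 4 : ℝ) ^ q * ((q + 1) * (q + 8))
      ≤ melonC 2 q * (1 / 4 : ℝ) ^ q * ((2 * q + 9) * (2 * q + 10) / 4) := by
        gcongr
        nlinarith [Nat.cast_nonneg (α := ℝ) q]
    _ = melonC 2 (q + 1) * ((q + 1) * (q + 8)) * (1 / 4 : ℝ) ^ (q + 1) := by
        rw [hrec, pow_succ]; ring
    _ = _ := by ring

lemma one_div_succ_le_melonC_one_mul_pow (p : ℕ) :
    1 / ((p : ℝ) + 1) ≤ melonC p 1 * (27 / 256 : ℝ) ^ p := by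
  have h0 : melonC 0 1 = 1 := by norm_num [melonC]
  have h := monotone_succ_mul_melonC_one (Nat.zero_le p)
  simp only [h0, Nat.cast_zero, zero_add, pow_zero, mul_one] at h
  rw [div_le_iff₀ (by positivity)]
  linarith

lemma four_le_melonC_two_mul_pow (q : ℕ) : 4 ≤ melonC 2 q * (1 / 4 : ℝ) ^ q := by
  have h0 : melonC 2 0 = 4 := by norm_num [melonC, Nat.factorial]
  simpa [h0] using monotone_melonC_two_mul_pow (Nat.zero_le q)

lemma not_summable_of_div_succ_le {f : ℕ → ℝ} {c : ℝ} (hc : 0 < c)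
    (hf : ∀ n : ℕ, c / ((n : ℝ) + 1) ≤ f n) : ¬Summable f := by
  intro hsum
  have hharm : Summable fun n : ℕ => 1 / ((n : ℝ) + 1) := by
    refine (hsum.mul_left c⁻¹).of_nonneg_of_le (fun n => by positivity) fun n => ?_
    rw [le_inv_mul_iff₀ hc, mul_one_div]
    exact hf n
  exact Real.not_summable_one_div_natCast ((summable_nat_add_iff 1).1 (by exact_mod_cast hharm))

theorem summable_melon_series_bounds (g μ : ℝ) (hg : 0 < g) (hμ : 0 < μ)
    (h : Summable (fun pq : ℕ × ℕ => melonC pq.1 pq.2 * g ^ (pq.1 + pq.2) * μ ^ pq.2)) :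
    g < 27 / 256 ∧ g * μ < 1 / 4 := by
  constructor
  · by_contra! hge
    have hrow := h.comp_injective (Prod.mk_left_injective 1)
    refine not_summable_of_div_succ_le (mul_pos hg hμ) (fun p => ?_) hrow
    have hC := (melonC_pos p 1).le
    calc g * μ / ((p : ℝ) + 1) ≤ melonC p 1 * (27 / 256 : ℝ) ^ p * (g * μ) := by
          rw [div_eq_mul_one_div, mul_comm]
          gcongr
          exact one_div_succ_le_melonC_one_mul_pow p
      _ ≤ melonC p 1 * g ^ p * (g * μ) := by gcongr
      _ = _ := by simp only [Function.comp_apply, pow_succ]; ring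
  · by_contra! hge
    have hbound (q : ℕ) : 4 * g ^ 2 ≤ melonC 2 q * g ^ (2 + q) * μ ^ q :=
      calc 4 * g ^ 2 ≤ melonC 2 q * (1 / 4 : ℝ) ^ q * g ^ 2 := by
            gcongr; exact four_le_melonC_two_mul_pow q
        _ ≤ melonC 2 q * (g * μ) ^ q * g ^ 2 := by
            gcongr; exact (melonC_pos 2 q).le
        _ = _ := by ring
    have := ge_of_tendsto' (h.prod_factor 2).tendsto_atTop_zero hbound
    nlinarith [pow_pos hg 2]
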